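/- (Descent inequality from smoothness) Let C be a real n×n matrix, X ∈ O(n), and Ω a skew-symmetric real n×n matrix with ‖Ω‖₂ < π. Then Tr(C X) − Tr(C · X·exp(Ω)) ≤ −Tr(Ωᵀ · skew(Xᵀ Cᵀ)) + (σmax(C)/2)·‖Ω‖_F². -/

import Mathlib

open Matrix

noncomputable section

/-- Matrix exponential of a real square matrix. -/
def mexp {n : ℕ} (A : Matrix (Fin n) (Fin n) ℝ) : Matrix (Fin n) (Fin n) ℝ :=
  NormedSpace.exp A

/-- Skew-symmetric part: `skew M = (M - Mᵀ)/2`. -/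
def skewPart {n : ℕ} (M : Matrix (Fin n) (Fin n) ℝ) : Matrix (Fin n) (Fin n) ℝ :=
  (1 / 2 : ℝ) • (M - Mᵀ)

/-- Frobenius norm of a real square matrix. -/
def frobNorm {n : ℕ} (A : Matrix (Fin n) (Fin n) ℝ) : ℝ :=
  Real.sqrt (∑ i, ∑ j, (A i j) ^ 2)

/-- The singular values of `A`: square roots of the eigenvalues of `AᴴA = AᵀA`. -/
def singVals {n : ℕ} (A : Matrix (Fin n) (Fin n) ℝ) : Fin n → ℝ :=
  fun i => Real.sqrt ((by simpa using Matrix.isHermitian_conjTranspose_mul_self A : (Aᵀ * A).IsHermitian).eigenvalues i)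

/-- Largest singular value of `A`. -/
def sigmaMax {n : ℕ} (A : Matrix (Fin n) (Fin n) ℝ) : ℝ := ⨆ i, singVals A i

/-- Smallest singular value of `A`. -/
def sigmaMin {n : ℕ} (A : Matrix (Fin n) (Fin n) ℝ) : ℝ := ⨅ i, singVals A i

/-- Spectral norm (largest singular value) of `A`. -/
def specNorm {n : ℕ} (A : Matrix (Fin n) (Fin n) ℝ) : ℝ := sigmaMax A

/-- Riemannian distance on a connected component of `O(n)`:
`dist(X,Y) = min { ‖Ω‖_F : Ω skew-symmetric, X·exp(Ω) = Y }`. -/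
def Odist {n : ℕ} (X Y : Matrix (Fin n) (Fin n) ℝ) : ℝ :=
  sInf {d : ℝ | ∃ Ω : Matrix (Fin n) (Fin n) ℝ, Ωᵀ = -Ω ∧ X * mexp Ω = Y ∧ d = frobNorm Ω}

end

/-! Along the geodesic `t ↦ X exp(tΩ)` the objective `f t = -Tr(C X exp(tΩ))` has second
derivative `-Tr(C Q Ω Ω) = Tr(C Q Ωᵀ Ω)` with `Q = X exp(tΩ)` orthogonal, which is at most
`‖C Q‖₂ ‖Ω‖_F² = ‖C‖₂ ‖Ω‖_F² ≤ σmax(C) ‖Ω‖_F²`. The second-order Taylor bound on `[0, 1]` is the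
claim, since `f' 0 = -Tr(C X Ω)` is the pairing of `Ω` with the Riemannian gradient. -/

theorem le_add_deriv_mul_add_of_deriv2_le {f f' f'' : ℝ → ℝ} {M a b : ℝ}
    (hf : ∀ t, HasDerivAt f (f' t) t) (hf' : ∀ t, HasDerivAt f' (f'' t) t)
    (hM : ∀ t, f'' t ≤ M) (hab : a ≤ b) :
    f b ≤ f a + f' a * (b - a) + M / 2 * (b - a) ^ 2 := by
  let g' : ℝ → ℝ := fun t => f' t - f' a - M * (t - a)
  let g : ℝ → ℝ := fun t => f t - f' a * (t - a) - M / 2 * (t - a) ^ 2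
  have hg'_deriv : ∀ t, HasDerivAt g' (f'' t - M) t := fun t => by
    have := ((hf' t).sub_const (f' a)).sub (((hasDerivAt_id' t).sub_const a).const_mul M)
    rwa [mul_one] at this
  have hg_deriv : ∀ t, HasDerivAt g (g' t) t := fun t => by
    have := ((hf t).sub (((hasDerivAt_id' t).sub_const a).const_mul (f' a))).sub
      ((((hasDerivAt_id' t).sub_const a).pow 2).const_mul (M / 2))
    refine this.congr_deriv ?_
    simp only [g']
    ring
  have hg'_anti : Antitone g' := antitone_of_deriv_nonpos
    (fun t => (hg'_deriv t).differentiableAt)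
    (fun t => by rw [(hg'_deriv t).deriv]; linarith [hM t])
  have hg_anti : AntitoneOn g (Set.Ici a) := by
    refine antitoneOn_of_deriv_nonpos (convex_Ici a)
      (fun t _ => (hg_deriv t).continuousAt.continuousWithinAt)
      (fun t _ => (hg_deriv t).differentiableAt.differentiableWithinAt) fun t ht => ?_
    rw [interior_Ici] at ht
    rw [(hg_deriv t).deriv]
    simpa [g'] using hg'_anti (le_of_lt ht)
  have key : g b ≤ g a := hg_anti Set.self_mem_Ici hab hab
  simp only [g, sub_self, zero_pow two_ne_zero, mul_zero, sub_zero] at key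
  linarith

open scoped Matrix.Norms.L2Operator

theorem hasDerivAt_map_mexp_smul {n : ℕ} {F : Type*} [NormedAddCommGroup F] [NormedSpace ℝ F]
    (ℓ : Matrix (Fin n) (Fin n) ℝ →ₗ[ℝ] F)
    (Ω : Matrix (Fin n) (Fin n) ℝ) (t : ℝ) :
    HasDerivAt (fun s => ℓ (mexp (s • Ω))) (ℓ (mexp (t • Ω) * Ω)) t :=
  (LinearMap.toContinuousLinearMap ℓ).hasFDerivAt.comp_hasDerivAt t
    (hasDerivAt_exp_smul_const Ω t)

theorem mem_unitary_of_transpose_mul_self {m : Type*} [Fintype m] [DecidableEq m]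
    {X : Matrix m m ℝ} (hX : Xᵀ * X = 1) : X ∈ unitary (Matrix m m ℝ) := by
  rwa [← unitaryGroup, mem_unitaryGroup_iff', star_eq_conjTranspose,
    conjTranspose_eq_transpose_of_trivial]

theorem transpose_mexp_mul_mexp {n : ℕ} {Ω : Matrix (Fin n) (Fin n) ℝ} (hΩ : Ωᵀ = -Ω) :
    (mexp Ω)ᵀ * mexp Ω = 1 := by
  rw [mexp, ← exp_transpose, hΩ, ← exp_add_of_commute _ _ ((Commute.refl Ω).neg_left),
    neg_add_cancel, NormedSpace.exp_zero]

theorem l2_opNorm_le_sigmaMax {n : ℕ} (C : Matrix (Fin n) (Fin n) ℝ) : ‖C‖ ≤ sigmaMax C := by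
  have hCC : Cᴴ * C = Cᵀ * C := by rw [conjTranspose_eq_transpose_of_trivial]
  have hH : (Cᵀ * C).IsHermitian := hCC ▸ isHermitian_conjTranspose_mul_self C
  have hσ : 0 ≤ sigmaMax C := Real.iSup_nonneg fun i => Real.sqrt_nonneg _
  have heig : ∀ i, ‖hH.eigenvalues i‖ ≤ sigmaMax C ^ 2 := fun i => by
    have h0 : 0 ≤ hH.eigenvalues i := eigenvalues_conjTranspose_mul_self_nonneg C i
    have h1 : singVals C i ≤ sigmaMax C := le_ciSup (Set.finite_range _).bddAbove i
    calc ‖hH.eigenvalues i‖ = singVals C i ^ 2 := by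
          rw [Real.norm_of_nonneg h0, singVals, Real.sq_sqrt h0]
      _ ≤ sigmaMax C ^ 2 := by gcongr; exact Real.sqrt_nonneg _
  have hnorm : ‖Cᴴ * C‖ ≤ sigmaMax C ^ 2 := by
    rw [← cfc_id ℝ (Cᴴ * C) (isHermitian_conjTranspose_mul_self C)]
    refine norm_cfc_le (by positivity) fun x hx => ?_
    rw [hCC, hH.spectrum_real_eq_range_eigenvalues] at hx
    obtain ⟨i, rfl⟩ := hx
    exact heig i
  rw [l2_opNorm_conjTranspose_mul_self] at hnorm
  nlinarith [norm_nonneg C]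

open scoped RealInnerProductSpace in
theorem dotProduct_mulVec_le_l2_opNorm {m : Type*} [Fintype m] [DecidableEq m]
    (B : Matrix m m ℝ) (r : m → ℝ) :
    r ⬝ᵥ B *ᵥ r ≤ ‖B‖ * (r ⬝ᵥ r) := by
  have hr : r ⬝ᵥ r = ‖WithLp.toLp 2 r‖ ^ 2 := by
    rw [EuclideanSpace.norm_sq_eq]; simp [dotProduct, sq]
  rw [← inner_toEuclideanCLM, hr, cstar_norm_def, sq, ← mul_assoc, mul_comm _ ‖WithLp.toLp 2 r‖]
  exact (real_inner_le_norm _ _).trans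
    (mul_le_mul_of_nonneg_left ((toEuclideanCLM (n := m) (𝕜 := ℝ) B).le_opNorm _) (norm_nonneg _))

theorem trace_mul_transpose_mul_le {n : ℕ} (B M : Matrix (Fin n) (Fin n) ℝ) :
    (B * Mᵀ * M).trace ≤ ‖B‖ * frobNorm M ^ 2 := by
  have htr : (B * Mᵀ * M).trace = ∑ i, M i ⬝ᵥ B *ᵥ M i := by
    rw [trace_mul_comm, ← mul_assoc]
    simp [trace, mul_mul_apply]
  have hfrob : frobNorm M ^ 2 = ∑ i, M i ⬝ᵥ M i := by
    rw [frobNorm, Real.sq_sqrt (by positivity)]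
    simp [dotProduct, sq]
  rw [htr, hfrob, Finset.mul_sum]
  exact Finset.sum_le_sum fun i _ => dotProduct_mulVec_le_l2_opNorm B (M i)

theorem trace_transpose_mul_skewPart {n : ℕ} {Ω : Matrix (Fin n) (Fin n) ℝ} (hΩ : Ωᵀ = -Ω)
    (M : Matrix (Fin n) (Fin n) ℝ) : (Ωᵀ * skewPart M).trace = (Ωᵀ * M).trace := by
  have h : (Ωᵀ * Mᵀ).trace = -(Ωᵀ * M).trace := by
    rw [← trace_transpose, transpose_mul, transpose_transpose, transpose_transpose,
      trace_mul_comm, hΩ, neg_mul, trace_neg, neg_neg]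
  rw [skewPart, Matrix.mul_smul, Matrix.mul_sub, trace_smul, trace_sub, h, smul_eq_mul]
  ring

theorem procrustes_descent_inequality_general {n : ℕ}
    (C X Ω : Matrix (Fin n) (Fin n) ℝ)
    (hX : Xᵀ * X = 1)
    (hskew : Ωᵀ = -Ω) :
    (C * X).trace - (C * (X * mexp Ω)).trace ≤
      -(Ωᵀ * skewPart (Xᵀ * Cᵀ)).trace + (sigmaMax C / 2) * frobNorm Ω ^ 2 := by
  let ℓ : Matrix (Fin n) (Fin n) ℝ →ₗ[ℝ] ℝ :=
    -(traceLinearMap (Fin n) ℝ ℝ ∘ₗ LinearMap.mulLeft ℝ (C * X))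
  have hcurv : ∀ t : ℝ, ℓ (mexp (t • Ω) * Ω * Ω) ≤ sigmaMax C * frobNorm Ω ^ 2 := fun t => by
    have hQ : X * mexp (t • Ω) ∈ unitary (Matrix (Fin n) (Fin n) ℝ) :=
      mul_mem (mem_unitary_of_transpose_mul_self hX) (mem_unitary_of_transpose_mul_self
        (transpose_mexp_mul_mexp (by rw [transpose_smul, hskew, smul_neg])))
    calc ℓ (mexp (t • Ω) * Ω * Ω) = (C * (X * mexp (t • Ω)) * Ωᵀ * Ω).trace := by
          simp [ℓ, hskew, mul_assoc]
      _ ≤ ‖C * (X * mexp (t • Ω))‖ * frobNorm Ω ^ 2 := trace_mul_transpose_mul_le _ _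
      _ ≤ sigmaMax C * frobNorm Ω ^ 2 := by
          rw [CStarRing.norm_mul_mem_unitary _ hQ]
          gcongr
          exact l2_opNorm_le_sigmaMax C
  have htaylor := le_add_deriv_mul_add_of_deriv2_le (f' := fun s => ℓ (mexp (s • Ω) * Ω))
    (hasDerivAt_map_mexp_smul ℓ Ω) (hasDerivAt_map_mexp_smul (ℓ ∘ₗ LinearMap.mulRight ℝ Ω) Ω)
    hcurv zero_le_one
  have hgrad : (Ωᵀ * (Xᵀ * Cᵀ)).trace = (C * X * Ω).trace := by
    rw [← transpose_mul, ← transpose_mul, trace_transpose]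
  simp only [ℓ, LinearMap.neg_apply, LinearMap.coe_comp, Function.comp_apply,
    LinearMap.mulLeft_apply, traceLinearMap_apply, zero_smul, one_smul, mexp, NormedSpace.exp_zero,
    mul_one, one_mul, sub_zero, one_pow] at htaylor
  rw [trace_transpose_mul_skewPart hskew, hgrad, mexp]
  simp only [mul_assoc] at htaylor ⊢
  linarith

/-- geodesic smoothness (descent) inequality for the Procrustes
objective `f(X) = -Tr(CX)` with `L = σmax(C)`. -/
theorem procrustes_descent_inequality {n : ℕ}
    (C X Ω : Matrix (Fin n) (Fin n) ℝ)
    (hX : Xᵀ * X = 1)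
    (hskew : Ωᵀ = -Ω) (hΩ : specNorm Ω < Real.pi) :
    (C * X).trace - (C * (X * mexp Ω)).trace ≤
      -(Ωᵀ * skewPart (Xᵀ * Cᵀ)).trace + (sigmaMax C / 2) * frobNorm Ω ^ 2 :=
  procrustes_descent_inequality_general C X Ω hX hskew
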